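/- arXiv:math/0312333 — 3 statements merged into one kernel-verified Lean document; each statement's English description precedes it below -/
import Mathlib

section
/- Let R₀ be a commutative domain and let M be a p × q matrix over R₀ with p ≤ q. Suppose I is an ideal of R₀ contained in the radical of the ideal generated by the p × p minors of M, and suppose M has maximal rank p. Then every associated prime of the R₀-module coker(M) contains I. In particular, for every x ∈ I the localization of coker(M) at x is zero. -/
/-!
By Cramer's rule `N *ᵥ cramer N v = N.det • v`, and the columns of a square submatrix of `M` are
columns of `M`, so every maximal minor of `M` annihilates `coker M`. Hence `I` lies in the radical
of the annihilator of `coker M`, and that radical is contained in every associated prime.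
-/

namespace Matrix

variable {R : Type*} [CommRing R] {m n : Type*} [Fintype n]

theorem range_mulVecLin_submatrix_le {k : Type*} [Fintype k] (M : Matrix m n R) (g : k → n) :
    LinearMap.range (M.submatrix id g).mulVecLin ≤ LinearMap.range M.mulVecLin := by
  rw [range_mulVecLin, range_mulVecLin]
  exact Submodule.span_mono (Set.range_comp_subset_range g M.col)

theorem det_smul_mem_range_mulVecLin [DecidableEq n] (N : Matrix n n R) (v : n → R) :
    N.det • v ∈ LinearMap.range N.mulVecLin :=
  ⟨cramer N v, mulVec_cramer N v⟩

def maxMinorsIdeal [Fintype m] [DecidableEq m] (M : Matrix m n R) : Ideal R :=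
  Ideal.span {d | ∃ g : m → n, Function.Injective g ∧ d = (M.submatrix id g).det}

theorem maxMinorsIdeal_le_annihilator_cokernel [Fintype m] [DecidableEq m] (M : Matrix m n R) :
    M.maxMinorsIdeal ≤ Module.annihilator R ((m → R) ⧸ LinearMap.range M.mulVecLin) := by
  rw [maxMinorsIdeal, Ideal.span_le]
  rintro _ ⟨g, -, rfl⟩
  rw [SetLike.mem_coe, Module.mem_annihilator]
  intro v
  induction v using Submodule.Quotient.induction_on with | H v => ?_
  rw [← Submodule.Quotient.mk_smul, Submodule.Quotient.mk_eq_zero]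
  exact range_mulVecLin_submatrix_le M g (det_smul_mem_range_mulVecLin _ v)

end Matrix

section

variable {R N : Type*} [CommRing R] [AddCommGroup N] [Module R N] {I : Ideal R}

theorem le_of_mem_associatedPrimes_of_le_radical_annihilator
    (hI : I ≤ (Module.annihilator R N).radical) {P : Ideal R} (hP : P ∈ associatedPrimes R N) :
    I ≤ P := by
  have hann : Module.annihilator R N ≤ P := by
    simpa only [Submodule.annihilator_top] using hP.annihilator_le
  exact hP.isPrime.radical ▸ hI.trans (Ideal.radical_mono hann)

theorem exists_pow_smul_eq_zero_of_mem_radical_annihilator {x : R}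
    (hx : x ∈ (Module.annihilator R N).radical) : ∃ n : ℕ, ∀ m : N, x ^ n • m = 0 := by
  obtain ⟨n, hn⟩ := hx
  exact ⟨n, Module.mem_annihilator.mp hn⟩

end

theorem stmt_3_general (R₀ : Type*) [CommRing R₀]
    (p q : ℕ) (M : Matrix (Fin p) (Fin q) R₀)
    (I : Ideal R₀)
    (hI : I ≤ (Ideal.span {d : R₀ | ∃ g : Fin p → Fin q, Function.Injective g ∧
      d = (M.submatrix id g).det}).radical) :
    (∀ P ∈ associatedPrimes R₀ ((Fin p → R₀) ⧸ LinearMap.range M.mulVecLin), I ≤ P)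
    ∧ ∀ x ∈ I, ∀ m : (Fin p → R₀) ⧸ LinearMap.range M.mulVecLin,
        ∃ n : ℕ, x ^ n • m = 0 := by
  have hann : I ≤ (Module.annihilator R₀ ((Fin p → R₀) ⧸ LinearMap.range M.mulVecLin)).radical :=
    hI.trans (Ideal.radical_mono M.maxMinorsIdeal_le_annihilator_cokernel)
  exact ⟨fun P hP => le_of_mem_associatedPrimes_of_le_radical_annihilator hann hP,
    fun x hx m => (exists_pow_smul_eq_zero_of_mem_radical_annihilator (hann hx)).imp
      fun n hn => hn m⟩

/-- Abstract form of Theorem 1 of Katzman's paper: if an ideal `I` of a domain `R₀`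
is contained in the radical of the ideal of maximal minors of a `p × q` matrix `M`
(`p ≤ q`) of maximal rank, then every associated prime of `coker M` contains `I`;
in particular the localization of `coker M` at any `x ∈ I` vanishes. -/
theorem stmt_3 (R₀ : Type*) [CommRing R₀] [IsDomain R₀]
    (p q : ℕ) (hpq : p ≤ q) (M : Matrix (Fin p) (Fin q) R₀)
    (hrank : ∃ g : Fin p → Fin q, Function.Injective g ∧
      (M.submatrix id g).det ≠ 0)
    (I : Ideal R₀)
    (hI : I ≤ (Ideal.span {d : R₀ | ∃ g : Fin p → Fin q, Function.Injective g ∧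
      d = (M.submatrix id g).det}).radical) :
    (∀ P ∈ associatedPrimes R₀ ((Fin p → R₀) ⧸ LinearMap.range M.mulVecLin), I ≤ P)
    ∧ ∀ x ∈ I, ∀ m : (Fin p → R₀) ⧸ LinearMap.range M.mulVecLin,
        ∃ n : ℕ, x ^ n • m = 0 :=
  stmt_3_general R₀ p q M I hI
end

section
/- Let R be a commutative Noetherian ring of prime characteristic p and f₁,…,fₛ ∈ R generate an ideal I. If there exist positive integers α, β with (f₁⋯fₛ)^α ∈ ⟨f₁^{α+β},…,fₛ^{α+β}⟩, then every element of the direct limit lim_{t} R/⟨f₁^t,…,fₛ^t⟩ (with transition maps given by multiplication by f₁⋯fₛ) is zero; that is, the top local cohomology module H^s_I(R), computed as this direct limit, vanishes. -/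
/-!
Raising the hypothesis to the `p^t`-th power with the Frobenius gives
`(f₁⋯fₛ)^(α p^t) ∈ ⟨fᵢ^((α+β) p^t)⟩`, and `(α + β) p^t ≥ t + α p^t` because `β p^t ≥ p^t > t`.
So `k = α p^t` kills the class of every `r` in stage `t`.
-/

open Ideal Set

lemma pow_expChar_pow_mem_span_range_pow {R ι : Type*} [CommSemiring R] (p : ℕ) [ExpChar R p]
    {g : ι → R} {x : R} (hx : x ∈ span (range g)) (e : ℕ) :
    x ^ p ^ e ∈ span (range fun i => g i ^ p ^ e) := by
  have hmap := mem_map_of_mem (iterateFrobenius R p e) hx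
  rwa [map_span, ← range_comp, iterateFrobenius_def] at hmap

lemma span_range_pow_le_of_le {R ι : Type*} [CommSemiring R] (g : ι → R) {a b : ℕ}
    (hab : a ≤ b) : span (range fun i => g i ^ b) ≤ span (range fun i => g i ^ a) :=
  span_le.2 <| range_subset_iff.2 fun i =>
    mem_of_dvd _ (pow_dvd_pow _ hab) (subset_span (mem_range_self i))

theorem stmt_6_general (R : Type*) [CommRing R]
    (p : ℕ) [Fact p.Prime] [CharP R p]
    (s : ℕ) (f : Fin s → R) (α β : ℕ) (hβ : 0 < β)
    (h : (∏ i, f i) ^ α ∈ Ideal.span (Set.range fun i => f i ^ (α + β))) :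
    ∀ t : ℕ, ∀ r : R, ∃ k : ℕ,
      (∏ i, f i) ^ k * r ∈ Ideal.span (Set.range fun i => f i ^ (t + k)) := by
  intro t r
  refine ⟨α * p ^ t, mul_mem_right r _ ?_⟩
  have hfrob := pow_expChar_pow_mem_span_range_pow p h t
  simp only [← pow_mul] at hfrob
  have ht : t < p ^ t := Nat.lt_pow_self (Fact.out : p.Prime).one_lt
  have hexp : t + α * p ^ t ≤ (α + β) * p ^ t := by nlinarith
  exact span_range_pow_le_of_le f hexp hfrob

/-- If `(f₁⋯fₛ)^α ∈ ⟨f₁^{α+β},…,fₛ^{α+β}⟩` for some positive `α, β` in a Noetherian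
ring of prime characteristic `p`, then every element of the direct limit
`lim_t R/⟨f₁^t,…,fₛ^t⟩` (transition maps: multiplication by `f₁⋯fₛ`) is zero;
concretely, the class of any `r ∈ R` in stage `t` dies at a later stage:
`∃ k, (f₁⋯fₛ)^k · r ∈ ⟨f₁^{t+k},…,fₛ^{t+k}⟩`. Hence `H^s_I(R) = 0`. -/
theorem stmt_6 (R : Type*) [CommRing R] [IsNoetherianRing R]
    (p : ℕ) [Fact p.Prime] [CharP R p]
    (s : ℕ) (f : Fin s → R) (α β : ℕ) (hα : 0 < α) (hβ : 0 < β)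
    (h : (∏ i, f i) ^ α ∈ Ideal.span (Set.range fun i => f i ^ (α + β))) :
    ∀ t : ℕ, ∀ r : R, ∃ k : ℕ,
      (∏ i, f i) ^ k * r ∈ Ideal.span (Set.range fun i => f i ^ (t + k)) :=
  stmt_6_general R p s f α β hβ h
end

section
/- Let C be a commutative ring, s ≥ 1, t ≥ 2, and consider the polynomial ring C[x₁,…,x_{s+1}, a₁,…,a_{s+1}]. Let F_{s+1,2} = (x₁⋯x_{s+1})² − ∑_{i=1}^{s+1} aᵢ xᵢ³. If for some α ≥ 0, β ≥ 1 one has x₁^α ⋯ x_{s+1}^α ∈ ⟨x₁^{α+β},…,x_{s+1}^{α+β}, F_{s+1,2}⟩, then x₁^α ⋯ xₛ^α ∈ ⟨x₁^{α+β},…,xₛ^{α+β}, F_{s,2}⟩ in C[x₁,…,xₛ,a₁,…,aₛ], where F_{s,2} = (x₁⋯xₛ)² − ∑_{i=1}^{s} aᵢ xᵢ³. -/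
/-!
Specialise `x_{s+1} ↦ T`, `a_{s+1} ↦ 0` and `aᵢ ↦ aᵢT²` (`i ≤ s`) into `C[x₁,…,xₛ,a₁,…,aₛ][T]`.
This kills `a_{s+1}` and makes `T` record the degree for the grading `deg x_{s+1} = 1`,
`deg aᵢ = 2`: `F_{s+1,2}` becomes `F_{s,2}·T²`, `x_{s+1}^{α+β}` becomes `T^{α+β}`, the other
`xᵢ^{α+β}` are constants, and `x₁^α⋯x_{s+1}^α` becomes `x₁^α⋯xₛ^α·T^α`. The polynomials whose
coefficients of `T⁰,…,T^α` lie in `⟨x₁^{α+β},…,xₛ^{α+β}, F_{s,2}⟩` form an ideal; it contains the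
image of every generator because `α < α + β`, so reading off the coefficient of `T^α` (the paper's
"set `x_{s+1} = 1`") gives the claim.
-/

open MvPolynomial

namespace Polynomial

variable {R : Type*} [Semiring R]

def lowCoeffIdeal (J : Ideal R) (N : ℕ) : Ideal R[X] where
  carrier := {p | ∀ n ≤ N, p.coeff n ∈ J}
  add_mem' hp hq n hn := by
    rw [coeff_add]
    exact J.add_mem (hp n hn) (hq n hn)
  zero_mem' n _ := by
    rw [coeff_zero]
    exact J.zero_mem
  smul_mem' q p hp n hn := by
    rw [smul_eq_mul, coeff_mul]
    exact J.sum_mem fun c hc =>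
      J.mul_mem_left _ (hp c.2 (by rw [Finset.HasAntidiagonal.mem_antidiagonal] at hc; omega))

theorem C_mul_X_pow_mem_lowCoeffIdeal {J : Ideal R} {N k : ℕ} {a : R} :
    C a * X ^ k ∈ lowCoeffIdeal J N ↔ (k ≤ N → a ∈ J) := by
  refine ⟨fun h hk => by simpa using h k hk, fun h n hn => ?_⟩
  rw [coeff_C_mul_X_pow]
  split_ifs with hnk
  · exact h (hnk ▸ hn)
  · exact J.zero_mem

end Polynomial

open Polynomial (lowCoeffIdeal C_mul_X_pow_mem_lowCoeffIdeal)

section Katzman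

variable (R : Type*) [CommRing R]

/-- `F_{n,2}`, with `X (Sum.inl i)` for `xᵢ` and `X (Sum.inr i)` for `aᵢ`. -/
noncomputable def katzmanF (n : ℕ) : MvPolynomial (Fin n ⊕ Fin n) R :=
  (∏ i, X (Sum.inl i)) ^ 2 - ∑ i, X (Sum.inr i) * X (Sum.inl i) ^ 3

noncomputable def katzmanIdeal (n k : ℕ) : Ideal (MvPolynomial (Fin n ⊕ Fin n) R) :=
  Ideal.span (insert (katzmanF R n) (Set.range fun i => X (Sum.inl i) ^ k))

variable (s : ℕ)

noncomputable def specializeLast :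
    MvPolynomial (Fin (s + 1) ⊕ Fin (s + 1)) R →ₐ[R] Polynomial (MvPolynomial (Fin s ⊕ Fin s) R) :=
  aeval <| Sum.elim
    (Fin.lastCases Polynomial.X fun i => Polynomial.C (X (Sum.inl i)))
    (Fin.lastCases 0 fun i => Polynomial.C (X (Sum.inr i)) * Polynomial.X ^ 2)

@[simp]
theorem specializeLast_X_inl_last :
    specializeLast R s (X (Sum.inl (Fin.last s))) = Polynomial.X := by
  simp [specializeLast]

@[simp]
theorem specializeLast_X_inr_last : specializeLast R s (X (Sum.inr (Fin.last s))) = 0 := by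
  simp [specializeLast]

@[simp]
theorem specializeLast_X_inl_castSucc (i : Fin s) :
    specializeLast R s (X (Sum.inl i.castSucc)) = Polynomial.C (X (Sum.inl i)) := by
  simp [specializeLast]

@[simp]
theorem specializeLast_X_inr_castSucc (i : Fin s) :
    specializeLast R s (X (Sum.inr i.castSucc)) = Polynomial.C (X (Sum.inr i)) * Polynomial.X ^ 2 := by
  simp [specializeLast]

theorem specializeLast_prod_X_inl :
    specializeLast R s (∏ i, X (Sum.inl i)) = Polynomial.C (∏ i, X (Sum.inl i)) * Polynomial.X := by
  simp [Fin.prod_univ_castSucc]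

theorem specializeLast_katzmanF :
    specializeLast R s (katzmanF R (s + 1)) = Polynomial.C (katzmanF R s) * Polynomial.X ^ 2 := by
  rw [katzmanF, katzmanF, map_sub, map_pow, map_sum, specializeLast_prod_X_inl,
    Fin.sum_univ_castSucc]
  simp only [map_mul, map_pow, specializeLast_X_inl_castSucc, specializeLast_X_inr_castSucc,
    specializeLast_X_inl_last, specializeLast_X_inr_last, zero_mul, add_zero]
  simp only [map_sub, map_sum, map_mul, map_pow]
  rw [sub_mul, Finset.sum_mul]
  refine congrArg₂ (· - ·) ?_ ?_
  · ring
  · exact Finset.sum_congr rfl fun _ _ => by ring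

variable {R s}

theorem katzmanIdeal_le_comap_specializeLast {α k : ℕ} (hαk : α < k) :
    katzmanIdeal R (s + 1) k ≤ (lowCoeffIdeal (katzmanIdeal R s k) α).comap (specializeLast R s) := by
  rw [katzmanIdeal, Ideal.span_le]
  rintro _ (rfl | ⟨i, rfl⟩)
  · rw [SetLike.mem_coe, Ideal.mem_comap, specializeLast_katzmanF, C_mul_X_pow_mem_lowCoeffIdeal]
    exact fun _ => Ideal.subset_span (Set.mem_insert _ _)
  · rw [SetLike.mem_coe, Ideal.mem_comap]
    induction i using Fin.lastCases with
    | last =>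
      rw [map_pow, specializeLast_X_inl_last, ← one_mul (Polynomial.X ^ k), ← map_one Polynomial.C,
        C_mul_X_pow_mem_lowCoeffIdeal]
      omega
    | cast i =>
      rw [map_pow, specializeLast_X_inl_castSucc, ← mul_one (Polynomial.C _ ^ k), ← map_pow,
        ← pow_zero Polynomial.X, C_mul_X_pow_mem_lowCoeffIdeal]
      exact fun _ => Ideal.subset_span (Set.mem_insert_of_mem _ ⟨i, rfl⟩)

theorem prod_X_inl_pow_mem_katzmanIdeal_of_succ {α k : ℕ} (hαk : α < k)
    (h : (∏ i, X (Sum.inl i)) ^ α ∈ katzmanIdeal R (s + 1) k) :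
    (∏ i, X (Sum.inl i)) ^ α ∈ katzmanIdeal R s k := by
  have h' := katzmanIdeal_le_comap_specializeLast hαk h
  rw [Ideal.mem_comap, map_pow, specializeLast_prod_X_inl, mul_pow, ← map_pow,
    C_mul_X_pow_mem_lowCoeffIdeal] at h'
  exact h' le_rfl

end Katzman

theorem stmt_8_general (C : Type*) [CommRing C] (s : ℕ) (α β : ℕ) (hβ : 1 ≤ β)
    (h : (∏ i : Fin (s + 1), (X (Sum.inl i) : MvPolynomial (Fin (s + 1) ⊕ Fin (s + 1)) C)) ^ α ∈
      Ideal.span (insert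
        ((∏ i : Fin (s + 1), (X (Sum.inl i) : MvPolynomial (Fin (s + 1) ⊕ Fin (s + 1)) C)) ^ 2
          - ∑ i : Fin (s + 1), X (Sum.inr i) * X (Sum.inl i) ^ 3)
        (Set.range fun i : Fin (s + 1) =>
          (X (Sum.inl i) : MvPolynomial (Fin (s + 1) ⊕ Fin (s + 1)) C) ^ (α + β)))) :
    (∏ i : Fin s, (X (Sum.inl i) : MvPolynomial (Fin s ⊕ Fin s) C)) ^ α ∈
      Ideal.span (insert
        ((∏ i : Fin s, (X (Sum.inl i) : MvPolynomial (Fin s ⊕ Fin s) C)) ^ 2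
          - ∑ i : Fin s, X (Sum.inr i) * X (Sum.inl i) ^ 3)
        (Set.range fun i : Fin s =>
          (X (Sum.inl i) : MvPolynomial (Fin s ⊕ Fin s) C) ^ (α + β))) :=
  prod_X_inl_pow_mem_katzmanIdeal_of_succ (by omega) h

/-- The inductive step in Katzman's Proposition that `H_{s,2} ≠ 0`: if
`x₁^α⋯x_{s+1}^α ∈ ⟨x₁^{α+β},…,x_{s+1}^{α+β}, F_{s+1,2}⟩` in
`C[x₁,…,x_{s+1},a₁,…,a_{s+1}]`, where
`F_{s+1,2} = (x₁⋯x_{s+1})² − ∑_{i=1}^{s+1} aᵢxᵢ³`, then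
`x₁^α⋯xₛ^α ∈ ⟨x₁^{α+β},…,xₛ^{α+β}, F_{s,2}⟩` in `C[x₁,…,xₛ,a₁,…,aₛ]`.
Here `X (Sum.inl i)` plays the role of `xᵢ` and `X (Sum.inr i)` of `aᵢ`. -/
theorem stmt_8 (C : Type*) [CommRing C] (s : ℕ) (hs : 1 ≤ s) (α β : ℕ) (hβ : 1 ≤ β)
    (h : (∏ i : Fin (s + 1), (X (Sum.inl i) : MvPolynomial (Fin (s + 1) ⊕ Fin (s + 1)) C)) ^ α ∈
      Ideal.span (insert
        ((∏ i : Fin (s + 1), (X (Sum.inl i) : MvPolynomial (Fin (s + 1) ⊕ Fin (s + 1)) C)) ^ 2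
          - ∑ i : Fin (s + 1), X (Sum.inr i) * X (Sum.inl i) ^ 3)
        (Set.range fun i : Fin (s + 1) =>
          (X (Sum.inl i) : MvPolynomial (Fin (s + 1) ⊕ Fin (s + 1)) C) ^ (α + β)))) :
    (∏ i : Fin s, (X (Sum.inl i) : MvPolynomial (Fin s ⊕ Fin s) C)) ^ α ∈
      Ideal.span (insert
        ((∏ i : Fin s, (X (Sum.inl i) : MvPolynomial (Fin s ⊕ Fin s) C)) ^ 2
          - ∑ i : Fin s, X (Sum.inr i) * X (Sum.inl i) ^ 3)
        (Set.range fun i : Fin s =>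
          (X (Sum.inl i) : MvPolynomial (Fin s ⊕ Fin s) C) ^ (α + β))) :=
  stmt_8_general C s α β hβ h
end
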